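/- Let H₁ and H₂ be finite-dimensional complex Hilbert spaces, let {φᵢ} and {χᵢ} be orthonormal bases of H₁ and H₂ respectively, and let ρ = Σ_{i,j} a_{ij} |φᵢ⟩⟨φⱼ| ⊗ |χᵢ⟩⟨χⱼ| be a density operator on H₁ ⊗ H₂ with complex coefficients a_{ij}. Then ‖ρ‖_γ = Σ_{i,j} |a_{ij}|. -/

import Mathlib

/-!
The decomposition `ρ = ∑ i j, (a i j • |φ i⟩⟨φ j|) ⊗ |χ i⟩⟨χ j|` has cost `∑ i j, |a i j|`,
since a rank-one `|x⟩⟨y|` with `‖y‖ = 1` has trace norm `‖x‖`. Conversely, for any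
decomposition `ρ = ∑ k, u k ⊗ v k` the coefficients are recovered as
`a i j = ⟨φ i ⊗ χ i|ρ|φ j ⊗ χ j⟩ = ∑ k, ⟨φ i|u k|φ j⟩ ⟨χ i|v k|χ j⟩`. By Cauchy–Schwarz over the
pairs `(i, j)` and Bessel's inequality (applied to rows and columns),
`∑ i j, |⟨φ i|u|φ j⟩ ⟨χ i|v|χ j⟩| ≤ ‖u‖₂ ‖v‖₂`, and the Hilbert–Schmidt norm is bounded by the
trace norm because `∑ λ ≤ (∑ √λ)²` for the eigenvalues `λ ≥ 0` of `uᴴ u`.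
-/

open Matrix
open scoped Kronecker ComplexOrder

noncomputable def traceNorm {n : Type*} [Fintype n] [DecidableEq n] (A : Matrix n n ℂ) : ℝ :=
  ((Matrix.posSemidef_conjTranspose_mul_self A).1.eigenvectorUnitary.1 *
    Matrix.diagonal (((↑) : ℝ → ℂ) ∘ Real.sqrt ∘ (Matrix.posSemidef_conjTranspose_mul_self A).1.eigenvalues) *
    (star (Matrix.posSemidef_conjTranspose_mul_self A).1.eigenvectorUnitary : Matrix n n ℂ)).trace.re

noncomputable def gammaNorm {m n : Type*} [Fintype m] [DecidableEq m] [Fintype n] [DecidableEq n]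
    (t : Matrix (m × n) (m × n) ℂ) : ℝ :=
  sInf { c : ℝ | ∃ (r : ℕ) (u : Fin r → Matrix m m ℂ) (v : Fin r → Matrix n n ℂ),
    t = ∑ i, (u i) ⊗ₖ (v i) ∧ c = ∑ i, traceNorm (u i) * traceNorm (v i) }

def IsDensity {n : Type*} [Fintype n] (ρ : Matrix n n ℂ) : Prop :=
  ρ.PosSemidef ∧ ρ.trace = 1

def evec {ι : Type*} (ψ : EuclideanSpace ℂ ι) : ι → ℂ := ψ

noncomputable def tensorVec {ι κ : Type*} (a : EuclideanSpace ℂ ι) (b : EuclideanSpace ℂ κ) :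
    EuclideanSpace ℂ (ι × κ) :=
  (WithLp.equiv 2 _).symm (fun p => evec a p.1 * evec b p.2)

noncomputable def projOnto {ι : Type*} (ψ : EuclideanSpace ℂ ι) : Matrix ι ι ℂ :=
  Matrix.vecMulVec (evec ψ) (star (evec ψ))

/-- The rank-one operator `|x⟩⟨y|`, i.e. `z ↦ ⟨y, z⟩ x`, as a matrix. -/
noncomputable def ketBra {ι : Type*} (x y : EuclideanSpace ℂ ι) : Matrix ι ι ℂ :=
  Matrix.vecMulVec (evec x) (star (evec y))

open scoped MatrixOrder

theorem re_trace_conjTranspose_mul_self {m n : Type*} [Fintype m] [Fintype n]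
    (A : Matrix m n ℂ) : (Aᴴ * A).trace.re = ∑ i, ∑ j, ‖A i j‖ ^ 2 := by
  simp only [trace, diag_apply, mul_apply, conjTranspose_apply, Complex.re_sum]
  rw [Finset.sum_comm]
  simp [← Complex.normSq_eq_norm_sq, Complex.normSq_apply, mul_comm]

section TraceNorm

variable {k : Type*} [Fintype k] [DecidableEq k]

theorem traceNorm_eq_sum_sqrt_eigenvalues (A : Matrix k k ℂ) :
    traceNorm A = ∑ i, √((posSemidef_conjTranspose_mul_self A).1.eigenvalues i) := by
  rw [traceNorm, trace_mul_cycle, Unitary.coe_star_mul_self, one_mul, trace_diagonal,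
    Complex.re_sum]
  rfl

theorem traceNorm_nonneg (A : Matrix k k ℂ) : 0 ≤ traceNorm A := by
  rw [traceNorm_eq_sum_sqrt_eigenvalues]
  positivity

theorem sum_norm_sq_le_traceNorm_sq (A : Matrix k k ℂ) :
    ∑ i, ∑ j, ‖A i j‖ ^ 2 ≤ traceNorm A ^ 2 := by
  have hA := posSemidef_conjTranspose_mul_self A
  calc ∑ i, ∑ j, ‖A i j‖ ^ 2 = ∑ i, hA.1.eigenvalues i := by
        rw [← re_trace_conjTranspose_mul_self, hA.1.trace_eq_sum_eigenvalues]
        simp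
    _ = ∑ i, √(hA.1.eigenvalues i) ^ 2 := by
        simp [Real.sq_sqrt (hA.eigenvalues_nonneg _)]
    _ ≤ traceNorm A ^ 2 := by
        rw [traceNorm_eq_sum_sqrt_eigenvalues]
        exact Finset.sum_sq_le_sq_sum_of_nonneg fun i _ => Real.sqrt_nonneg _

theorem traceNorm_eq_re_trace_of_mul_self_eq {A S : Matrix k k ℂ} (hS : S.PosSemidef)
    (hSA : S * S = Aᴴ * A) : traceNorm A = S.trace.re := by
  have hA := posSemidef_conjTranspose_mul_self A
  have hsqrt : S = cfc Real.sqrt (Aᴴ * A) := by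
    rw [← CFC.sqrt_unique hSA hS.nonneg, CFC.sqrt_eq_real_sqrt _ hA.nonneg, cfcₙ_eq_cfc]
  rw [hsqrt, hA.1.cfc_eq, IsHermitian.cfc, Unitary.conjStarAlgAut_apply, traceNorm]
  rfl

end TraceNorm

section RankOne

variable {k : Type*}

theorem ketBra_smul_left (c : ℂ) (x y : EuclideanSpace ℂ k) :
    ketBra (c • x) y = c • ketBra x y :=
  smul_vecMulVec c _ _

theorem conjTranspose_ketBra (x y : EuclideanSpace ℂ k) : (ketBra x y)ᴴ = ketBra y x := by
  simp [ketBra]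

variable [Fintype k]

noncomputable def matrixElement (x : EuclideanSpace ℂ k) (A : Matrix k k ℂ)
    (y : EuclideanSpace ℂ k) : ℂ :=
  star (evec x) ⬝ᵥ A *ᵥ evec y

theorem inner_eq_star_evec_dotProduct (x y : EuclideanSpace ℂ k) :
    inner ℂ x y = star (evec x) ⬝ᵥ evec y :=
  dotProduct_comm _ _

theorem ketBra_mul_ketBra (x y z w : EuclideanSpace ℂ k) :
    ketBra x y * ketBra z w = inner ℂ y z • ketBra x w := by
  rw [ketBra, ketBra, vecMulVec_mul_vecMulVec, vecMulVec_smul, inner_eq_star_evec_dotProduct,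
    ketBra]

theorem trace_ketBra (x y : EuclideanSpace ℂ k) : (ketBra x y).trace = inner ℂ y x := by
  rw [ketBra, trace_vecMulVec, inner_eq_star_evec_dotProduct, dotProduct_comm]

theorem posSemidef_ketBra_self (x : EuclideanSpace ℂ k) : (ketBra x x).PosSemidef :=
  posSemidef_vecMulVec_self_star _

theorem matrixElement_ketBra (f x y g : EuclideanSpace ℂ k) :
    matrixElement f (ketBra x y) g = inner ℂ f x * inner ℂ y g := by
  simp only [matrixElement, ketBra, inner_eq_star_evec_dotProduct, vecMulVec_mulVec,
    dotProduct_smul, op_smul_eq_mul]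

variable [DecidableEq k]

theorem traceNorm_ketBra {y : EuclideanSpace ℂ k} (x : EuclideanSpace ℂ k) (hy : ‖y‖ = 1) :
    traceNorm (ketBra x y) = ‖x‖ := by
  have hyy : inner ℂ y y = 1 := by simp [inner_self_eq_norm_sq_to_K, hy]
  have hS : ((‖x‖ : ℂ) • ketBra y y).PosSemidef :=
    (posSemidef_ketBra_self y).smul (by exact_mod_cast norm_nonneg x)
  rw [traceNorm_eq_re_trace_of_mul_self_eq hS]
  · simp [trace_smul, trace_ketBra, hy]
  · rw [conjTranspose_ketBra, ketBra_mul_ketBra, smul_mul_smul_comm, ketBra_mul_ketBra, hyy,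
      inner_self_eq_norm_sq_to_K, one_smul, sq]
    rfl

end RankOne

section MatrixElement

variable {k : Type*} [Fintype k]

theorem matrixElement_sum {κ : Type*} (s : Finset κ) (x y : EuclideanSpace ℂ k)
    (A : κ → Matrix k k ℂ) :
    matrixElement x (∑ i ∈ s, A i) y = ∑ i ∈ s, matrixElement x (A i) y := by
  simp only [matrixElement, sum_mulVec, dotProduct_sum]

theorem matrixElement_smul (c : ℂ) (x y : EuclideanSpace ℂ k) (A : Matrix k k ℂ) :
    matrixElement x (c • A) y = c * matrixElement x A y := by
  simp only [matrixElement, smul_mulVec, dotProduct_smul, smul_eq_mul]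

theorem matrixElement_kronecker_tensorVec {l : Type*} [Fintype l] (f g : EuclideanSpace ℂ k)
    (f' g' : EuclideanSpace ℂ l) (A : Matrix k k ℂ) (B : Matrix l l ℂ) :
    matrixElement (tensorVec f f') (A ⊗ₖ B) (tensorVec g g') =
      matrixElement f A g * matrixElement f' B g' := by
  simp only [matrixElement, dotProduct, mulVec, kroneckerMap_apply, Fintype.sum_prod_type,
    Pi.star_apply, Finset.sum_mul_sum]
  refine Finset.sum_congr rfl fun p _ => Finset.sum_congr rfl fun p' _ => ?_
  rw [mul_mul_mul_comm, Finset.sum_mul_sum]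
  simp only [tensorVec, evec, WithLp.equiv_symm_apply, star_mul']
  congr 1
  refine Finset.sum_congr rfl fun q _ => Finset.sum_congr rfl fun q' _ => ?_
  ring

theorem Orthonormal.sum_norm_sq_matrixElement_le {ι : Type*} [Fintype ι]
    {φ : ι → EuclideanSpace ℂ k} (hφ : Orthonormal ℂ φ) (A : Matrix k k ℂ) :
    ∑ i, ∑ j, ‖matrixElement (φ i) A (φ j)‖ ^ 2 ≤ ∑ p, ∑ q, ‖A p q‖ ^ 2 := by
  have bessel (w : k → ℂ) : ∑ i, ‖inner ℂ (φ i) (WithLp.toLp 2 w)‖ ^ 2 ≤ ∑ p, ‖w p‖ ^ 2 := by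
    simpa [EuclideanSpace.norm_sq_eq] using hφ.sum_inner_products_le (WithLp.toLp 2 w)
  calc ∑ i, ∑ j, ‖matrixElement (φ i) A (φ j)‖ ^ 2
      = ∑ j, ∑ i, ‖inner ℂ (φ i) (WithLp.toLp 2 (A *ᵥ evec (φ j)))‖ ^ 2 := by
        rw [Finset.sum_comm]
        simp only [matrixElement, inner_eq_star_evec_dotProduct]
        rfl
    _ ≤ ∑ j, ∑ p, ‖(A *ᵥ evec (φ j)) p‖ ^ 2 := Finset.sum_le_sum fun j _ => bessel _
    _ = ∑ p, ∑ j, ‖inner ℂ (φ j) (WithLp.toLp 2 (star (A p)))‖ ^ 2 := by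
        rw [Finset.sum_comm]
        refine Finset.sum_congr rfl fun p _ => Finset.sum_congr rfl fun j _ => ?_
        have : inner ℂ (φ j) (WithLp.toLp 2 (star (A p))) = star ((A *ᵥ evec (φ j)) p) := by
          simp [inner_eq_star_evec_dotProduct, evec, mulVec, dotProduct, mul_comm]
        rw [this, norm_star]
    _ ≤ ∑ p, ∑ q, ‖A p q‖ ^ 2 := Finset.sum_le_sum fun p _ => by
        simpa using bessel (star (A p))

end MatrixElement

section Orthonormal

variable {k l ι : Type*} [Fintype k] [Fintype l] [Fintype ι]
  {φ : ι → EuclideanSpace ℂ k} {χ : ι → EuclideanSpace ℂ l}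

theorem matrixElement_tensorVec_schmidt (hφ : Orthonormal ℂ φ) (hχ : Orthonormal ℂ χ)
    (a : ι → ι → ℂ) (i j : ι) :
    matrixElement (tensorVec (φ i) (χ i))
        (∑ i', ∑ j', a i' j' • (ketBra (φ i') (φ j')) ⊗ₖ (ketBra (χ i') (χ j')))
        (tensorVec (φ j) (χ j)) = a i j := by
  classical
  simp [matrixElement_sum, matrixElement_smul, matrixElement_kronecker_tensorVec,
    matrixElement_ketBra, orthonormal_iff_ite.mp hφ, orthonormal_iff_ite.mp hχ]

variable [DecidableEq k] [DecidableEq l]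

theorem Orthonormal.sqrt_sum_norm_sq_matrixElement_le_traceNorm (hφ : Orthonormal ℂ φ)
    (A : Matrix k k ℂ) : √(∑ i, ∑ j, ‖matrixElement (φ i) A (φ j)‖ ^ 2) ≤ traceNorm A :=
  (Real.sqrt_le_left (traceNorm_nonneg A)).2 <|
    (hφ.sum_norm_sq_matrixElement_le A).trans (sum_norm_sq_le_traceNorm_sq A)

theorem sum_norm_mul_matrixElement_le_traceNorm_mul (hφ : Orthonormal ℂ φ)
    (hχ : Orthonormal ℂ χ) (A : Matrix k k ℂ) (B : Matrix l l ℂ) :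
    ∑ i, ∑ j, ‖matrixElement (φ i) A (φ j)‖ * ‖matrixElement (χ i) B (χ j)‖ ≤
      traceNorm A * traceNorm B := by
  simp only [← Fintype.sum_prod_type']
  refine (Real.sum_mul_le_sqrt_mul_sqrt _ _ _).trans (mul_le_mul ?_ ?_ (Real.sqrt_nonneg _)
    (traceNorm_nonneg A))
  · simpa only [Fintype.sum_prod_type] using hφ.sqrt_sum_norm_sq_matrixElement_le_traceNorm A
  · simpa only [Fintype.sum_prod_type] using hχ.sqrt_sum_norm_sq_matrixElement_le_traceNorm B

theorem sum_norm_matrixElement_tensorVec_le (hφ : Orthonormal ℂ φ) (hχ : Orthonormal ℂ χ)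
    {κ : Type*} [Fintype κ] (u : κ → Matrix k k ℂ) (v : κ → Matrix l l ℂ) :
    ∑ i, ∑ j, ‖matrixElement (tensorVec (φ i) (χ i)) (∑ c, u c ⊗ₖ v c)
        (tensorVec (φ j) (χ j))‖ ≤ ∑ c, traceNorm (u c) * traceNorm (v c) :=
  calc _ ≤ ∑ i, ∑ j, ∑ c,
          ‖matrixElement (φ i) (u c) (φ j)‖ * ‖matrixElement (χ i) (v c) (χ j)‖ := by
        gcongr with i _ j _
        simp only [matrixElement_sum, matrixElement_kronecker_tensorVec, ← norm_mul]
        exact norm_sum_le _ _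
    _ = ∑ c, ∑ i, ∑ j,
          ‖matrixElement (φ i) (u c) (φ j)‖ * ‖matrixElement (χ i) (v c) (χ j)‖ := by
        simp only [Finset.sum_comm (γ := κ)]
    _ ≤ _ := Finset.sum_le_sum fun c _ =>
        sum_norm_mul_matrixElement_le_traceNorm_mul hφ hχ (u c) (v c)

end Orthonormal

theorem gammaNorm_eq_of_forall_le {m n κ : Type*} [Fintype m] [DecidableEq m] [Fintype n]
    [DecidableEq n] [Fintype κ] {t : Matrix (m × n) (m × n) ℂ} (u : κ → Matrix m m ℂ)
    (v : κ → Matrix n n ℂ) (ht : t = ∑ c, u c ⊗ₖ v c)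
    (hmin : ∀ (r : ℕ) (u' : Fin r → Matrix m m ℂ) (v' : Fin r → Matrix n n ℂ),
      t = ∑ i, u' i ⊗ₖ v' i →
        ∑ c, traceNorm (u c) * traceNorm (v c) ≤ ∑ i, traceNorm (u' i) * traceNorm (v' i)) :
    gammaNorm t = ∑ c, traceNorm (u c) * traceNorm (v c) := by
  let e := (Fintype.equivFin κ).symm
  refine IsLeast.csInf_eq ⟨⟨_, u ∘ e, v ∘ e, ?_, ?_⟩, ?_⟩
  · rw [ht, ← e.sum_comp]; rfl
  · exact (e.sum_comp _).symm
  · rintro _ ⟨r, u', v', ht', rfl⟩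
    exact hmin r u' v' ht'

theorem gammaNorm_of_schmidt_correlated_general (m n : ℕ) {ι : Type*} [Fintype ι]
    (φ : ι → EuclideanSpace ℂ (Fin m)) (χ : ι → EuclideanSpace ℂ (Fin n))
    (hφ : Orthonormal ℂ φ) (hχ : Orthonormal ℂ χ)
    (a : ι → ι → ℂ)
    (ρ : Matrix (Fin m × Fin n) (Fin m × Fin n) ℂ)
    (hρdef : ρ = ∑ i, ∑ j, a i j • (ketBra (φ i) (φ j)) ⊗ₖ (ketBra (χ i) (χ j))) :
    gammaNorm ρ = ∑ i, ∑ j, ‖a i j‖ := by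
  let u (p : ι × ι) : Matrix (Fin m) (Fin m) ℂ := ketBra (a p.1 p.2 • φ p.1) (φ p.2)
  let v (p : ι × ι) : Matrix (Fin n) (Fin n) ℂ := ketBra (χ p.1) (χ p.2)
  have hdecomp : ρ = ∑ p, u p ⊗ₖ v p := by
    simp only [hρdef, u, v, Fintype.sum_prod_type, ketBra_smul_left, smul_kronecker]
  have hcost : ∑ p, traceNorm (u p) * traceNorm (v p) = ∑ i, ∑ j, ‖a i j‖ := by
    simp [u, v, Fintype.sum_prod_type, traceNorm_ketBra, hφ.1, hχ.1, norm_smul]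
  rw [← hcost]
  refine gammaNorm_eq_of_forall_le u v hdecomp fun r u' v' hρ' => ?_
  calc ∑ p, traceNorm (u p) * traceNorm (v p)
      = ∑ i, ∑ j, ‖matrixElement (tensorVec (φ i) (χ i)) ρ (tensorVec (φ j) (χ j))‖ := by
        simp only [hcost, hρdef, matrixElement_tensorVec_schmidt hφ hχ]
    _ ≤ _ := hρ' ▸ sum_norm_matrixElement_tensorVec_le hφ hχ u' v'

/-- If `ρ = ∑ i j, a i j • |φ i⟩⟨φ j| ⊗ |χ i⟩⟨χ j|` is a density operator, with `φ`, `χ`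
orthonormal, then `‖ρ‖_γ = ∑ i j, |a i j|`. -/
theorem gammaNorm_of_schmidt_correlated (m n : ℕ) {ι : Type*} [Fintype ι]
    (φ : ι → EuclideanSpace ℂ (Fin m)) (χ : ι → EuclideanSpace ℂ (Fin n))
    (hφ : Orthonormal ℂ φ) (hχ : Orthonormal ℂ χ)
    (a : ι → ι → ℂ)
    (ρ : Matrix (Fin m × Fin n) (Fin m × Fin n) ℂ)
    (hρdef : ρ = ∑ i, ∑ j, a i j • (ketBra (φ i) (φ j)) ⊗ₖ (ketBra (χ i) (χ j)))
    (hρ : IsDensity ρ) :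
    gammaNorm ρ = ∑ i, ∑ j, ‖a i j‖ :=
  gammaNorm_of_schmidt_correlated_general m n φ χ hφ hχ a ρ hρdef
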